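/- arXiv:2510.05104 — 4 statements merged into one kernel-verified Lean document; each statement's English description precedes it below -/
import Mathlib

section
/- With H(c) = (x−1)∂ + c and B(c) = (1−c)(x(x−1)∂ + bx − c + 1), the composite operator B(c+1)∘H(c) applied to f₁ = (1−x)^{−b} equals c²(c−b)·f₁, i.e. the b-function of the contiguity c²(c−b) appears as the eigenvalue of the composed up-step and down-step operators on this solution. -/
open PowerSeries

/-- The Pochhammer symbol `(q)ₙ = q(q+1)⋯(q+n−1)`. -/
noncomputable def poch (q : ℂ) (n : ℕ) : ℂ := (ascPochhammer ℂ n).eval q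

/-- The formal power series `f₁ = (1−x)^{−b} = Σ (b)ₙ/n! xⁿ`. -/
noncomputable def f1 (b : ℂ) : PowerSeries ℂ :=
  PowerSeries.mk fun n => poch b n / n.factorial

/-- Formal differentiation `∂ = d/dx` on `ℂ⟦x⟧`. -/
noncomputable def Dps (f : PowerSeries ℂ) : PowerSeries ℂ := PowerSeries.derivative ℂ f

/-- `H(c) • f = (x−1)∂f + c·f`. -/
noncomputable def Hc (c : ℂ) (f : PowerSeries ℂ) : PowerSeries ℂ :=
  (X - 1) * Dps f + C (R := ℂ) c * f

/-- `B(c) • f = (1−c)(x(x−1)∂f + (bx − c + 1)·f)`. -/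
noncomputable def Bc (b c : ℂ) (f : PowerSeries ℂ) : PowerSeries ℂ :=
  C (R := ℂ) (1 - c) * (X * (X - 1) * Dps f + (C (R := ℂ) b * X - C (R := ℂ) c + 1) * f)

/-! `f₁ = (1 - x)^{-b}` satisfies `(x - 1) f₁' = -b f₁`, compared coefficientwise via
`(n + 1) aₙ₊₁ = (b + n) aₙ`. Hence both operators act on `f₁` (and, being linear, on its
scalar multiples) by scalars: `H(c) f₁ = (c - b) f₁` and `B(c) f₁ = (1 - c)² f₁`. -/

lemma poch_succ (b : ℂ) (n : ℕ) : poch b (n + 1) = poch b n * (b + n) := by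
  simp [poch, ascPochhammer_succ_right]

lemma coeff_succ_f1_mul (b : ℂ) (n : ℕ) :
    coeff (n + 1) (f1 b) * (n + 1) = (b + n) * coeff n (f1 b) := by
  have hn : (n : ℂ) + 1 ≠ 0 := n.cast_add_one_ne_zero
  have hfact : (n.factorial : ℂ) ≠ 0 := by exact_mod_cast n.factorial_ne_zero
  simp only [f1, coeff_mk, poch_succ, Nat.factorial_succ]
  push_cast
  field_simp

lemma coeff_X_mul_derivative {R : Type*} [CommSemiring R] (f : R⟦X⟧) (n : ℕ) :
    coeff n (X * d⁄dX R f) = n * coeff n f := by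
  cases n with
  | zero => simp
  | succ n => rw [coeff_succ_X_mul, coeff_derivative, mul_comm]; push_cast; ring

lemma X_sub_one_mul_Dps_f1 (b : ℂ) : (X - 1) * Dps (f1 b) = C (R := ℂ) (-b) * f1 b := by
  ext n
  rw [sub_mul, one_mul, map_sub, Dps, coeff_X_mul_derivative, coeff_derivative, coeff_C_mul,
    coeff_succ_f1_mul]
  ring

lemma Hc_f1 (b c : ℂ) : Hc c (f1 b) = C (R := ℂ) (c - b) * f1 b := by
  rw [Hc, X_sub_one_mul_Dps_f1, ← add_mul, ← map_add, neg_add_eq_sub]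

lemma Bc_f1 (b c : ℂ) : Bc b c (f1 b) = C (R := ℂ) ((1 - c) ^ 2) * f1 b := by
  rw [Bc, mul_assoc X, X_sub_one_mul_Dps_f1]
  simp only [map_pow, map_sub, map_neg, map_one]
  ring

lemma Bc_C_mul (b c a : ℂ) (f : PowerSeries ℂ) :
    Bc b c (C (R := ℂ) a * f) = C (R := ℂ) a * Bc b c f := by
  simp only [Bc, Dps, Derivation.leibniz, derivative_C, smul_eq_mul]
  ring

/-- `(B(c+1) ∘ H(c)) • f₁ = c²(c−b)·f₁`: the b-function of the
contiguity appears as the eigenvalue of the composed contiguity operators. -/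
theorem bfunction_on_f1 (b c : ℂ) :
    Bc b (c + 1) (Hc c (f1 b)) = C (R := ℂ) (c ^ 2 * (c - b)) * f1 b := by
  rw [Hc_f1, Bc_C_mul, Bc_f1, ← mul_assoc, ← map_mul]
  ring_nf
end

section
/- There exists an element s ∈ D such that (x(1−x)∂ − bx − a + c − 1)·(x∂ + a) = a(c−a−1) + s·L(a,b,c), where L(a,b,c) = θ(θ+c−1) − x(θ+a)(θ+b) and θ = x∂. Consequently, when a(c−a−1) ≠ 0, the operator (x(1−x)∂ − bx − a + c − 1)/(a(c−a−1)) is a left inverse of θ + a modulo the left ideal D·L(a,b,c). -/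
noncomputable def Xop : Module.End ℂ (Polynomial ℂ) := LinearMap.mulLeft ℂ Polynomial.X
noncomputable def Dop : Module.End ℂ (Polynomial ℂ) := Polynomial.derivative
/-- The Euler operator `θ = x∂`. -/
noncomputable def Th : Module.End ℂ (Polynomial ℂ) := Xop * Dop

/-- The Gauss hypergeometric operator `L(a,b,c) = θ(θ+c−1) − x(θ+a)(θ+b)`. -/
noncomputable def Lgauss (a b c : ℂ) : Module.End ℂ (Polynomial ℂ) :=
  Th * (Th + (c - 1) • 1) - Xop * (Th + a • 1) * (Th + b • 1)

/-- The operator `x(1−x)∂ − bx − a + c − 1`. -/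
noncomputable def Bop (a b c : ℂ) : Module.End ℂ (Polynomial ℂ) :=
  Xop * (1 - Xop) * Dop - b • Xop + (c - a - 1) • 1

lemma downstep_key (a b c : ℂ) :
    Bop a b c * (Th + a • 1) = (a * (c - a - 1)) • 1 + Lgauss a b c := by
  simp only [Bop, Lgauss, Th]
  simp only [mul_add, add_mul, mul_sub, sub_mul, mul_one, one_mul, smul_mul_assoc,
    mul_smul_comm, mul_assoc, smul_smul]
  module

/-- there is `s` in the Weyl algebra `D` with
`(x(1−x)∂ − bx − a + c − 1)·(x∂ + a) = a(c−a−1) + s·L(a,b,c)`; consequently,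
when `a(c−a−1) ≠ 0`, the operator `(x(1−x)∂ − bx − a + c − 1)/(a(c−a−1))`
is a left inverse of `θ + a` modulo the left ideal `D·L(a,b,c)`. -/
theorem downstep_syzygy (a b c : ℂ) :
    (∃ s ∈ Algebra.adjoin ℂ {Xop, Dop},
      Bop a b c * (Th + a • 1) = (a * (c - a - 1)) • 1 + s * Lgauss a b c) ∧
    (a * (c - a - 1) ≠ 0 →
      ∃ t ∈ Algebra.adjoin ℂ {Xop, Dop},
        ((a * (c - a - 1))⁻¹ • Bop a b c) * (Th + a • 1) - 1 = t * Lgauss a b c) := by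
  constructor
  · exact ⟨1, Subalgebra.one_mem _, by rw [one_mul]; exact downstep_key a b c⟩
  · intro hk
    refine ⟨(a * (c - a - 1))⁻¹ • 1, Subalgebra.smul_mem _ (Subalgebra.one_mem _) _, ?_⟩
    rw [smul_mul_assoc, smul_mul_assoc, one_mul, downstep_key, smul_add, smul_smul,
      inv_mul_cancel₀ hk, one_smul, add_sub_cancel_left]
end

section
/- With A as the 3×4 matrix with columns (1,0,0),(0,1,0),(0,0,1),(−1,1,1) and β = (β₁,0,1), the operator U = −(x₁x₄ − x₂x₃)∂₄ + (β₁+1)x₁ satisfies U·∂₁ − β₁(β₁+1) ∈ H_A((β₁,0,1)), where H_A(β) is the GKZ ideal generated by ∂₁∂₂ − ∂₃∂₄ and the Euler operators x₁∂₁ − x₄∂₄ − β₁, x₂∂₂ + x₄∂₄, x₃∂₃ + x₄∂₄ − 1. -/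
/-!
The first generator `∂₁∂₂ - ∂₃∂₄` is not `A`-homogeneous: its commutator with the Euler operator
`x₁∂₁ - x₄∂₄ - β₁` is `-(∂₁∂₂ + ∂₃∂₄)`, so `∂₁∂₂` and `∂₃∂₄` both lie in the ideal. Writing
`θᵢ = xᵢ∂ᵢ`, one has `U∂₁ - β₁(β₁+1) = (β₁ + 1 - θ₄)(x₁∂₁ - x₄∂₄ - β₁) + x₂x₃∂₁∂₄ - x₄²∂₄²`, and the
Euler operators turn `x₂x₃∂₁∂₄` and `x₄²∂₄² = θ₄(θ₄ - 1)` into left multiples of `∂₁∂₂` and `∂₃∂₄`.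
-/

/-- The polynomial ring `ℂ[x₁,x₂,x₃,x₄]` on which the Weyl algebra `D₄` acts
faithfully. -/
noncomputable abbrev P4 := MvPolynomial (Fin 4) ℂ

/-- Multiplication by `xᵢ`. -/
noncomputable def Xi (i : Fin 4) : Module.End ℂ P4 :=
  LinearMap.mulLeft ℂ (MvPolynomial.X i)

/-- The partial derivative `∂ᵢ`. -/
noncomputable def Di (i : Fin 4) : Module.End ℂ P4 :=
  (MvPolynomial.pderiv i).toLinearMap

/-- The Weyl algebra `D₄`, realized as the subalgebra of endomorphisms generated
by the `xᵢ` and `∂ᵢ`. -/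
noncomputable def weyl4 : Subalgebra ℂ (Module.End ℂ P4) :=
  Algebra.adjoin ℂ (Set.range Xi ∪ Set.range Di)

open MvPolynomial

theorem MvPolynomial.pderiv_pderiv_comm {σ R : Type*} [CommRing R] (i j : σ)
    (p : MvPolynomial σ R) : pderiv i (pderiv j p) = pderiv j (pderiv i p) := by
  classical
  have h : ⁅pderiv i, pderiv j⁆ = (0 : Derivation R (MvPolynomial σ R) (MvPolynomial σ R)) :=
    derivation_ext fun k => by
      rw [Derivation.commutator_apply]
      simp [pderiv_X, Pi.single_apply, apply_ite]
  have h_apply := congr(($h) p)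
  rwa [Derivation.commutator_apply, Derivation.zero_apply, sub_eq_zero] at h_apply

@[simp]
theorem Xi_apply (i : Fin 4) (p : P4) : Xi i p = X i * p := rfl

@[simp]
theorem Di_apply (i : Fin 4) (p : P4) : Di i p = pderiv i p := rfl

theorem Xi_mem_weyl4 (i : Fin 4) : Xi i ∈ weyl4 := Algebra.subset_adjoin (Or.inl ⟨i, rfl⟩)

theorem Di_mem_weyl4 (i : Fin 4) : Di i ∈ weyl4 := Algebra.subset_adjoin (Or.inr ⟨i, rfl⟩)

theorem Xi_mul_Di_mem_weyl4 (i j : Fin 4) : Xi i * Di j ∈ weyl4 :=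
  mul_mem (Xi_mem_weyl4 i) (Di_mem_weyl4 j)

/-- The generators of `H_A((β₁,0,1))`; indices are shifted: `Xi k`, `Di k` are `xₖ₊₁`, `∂ₖ₊₁`. -/
noncomputable def gkzGenerator (β₁ : ℂ) : Fin 4 → Module.End ℂ P4 :=
  ![Di 0 * Di 1 - Di 2 * Di 3, Xi 0 * Di 0 - Xi 3 * Di 3 - β₁ • 1,
    Xi 1 * Di 1 + Xi 3 * Di 3, Xi 2 * Di 2 + Xi 3 * Di 3 - 1]

/-- `weyl4` acts on `Module.End ℂ P4` by left multiplication, so this is the left ideal of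
`weyl4` generated by the `gkzGenerator`s. -/
noncomputable def gkzIdeal (β₁ : ℂ) : Submodule weyl4 (Module.End ℂ P4) :=
  Submodule.span weyl4 (Set.range (gkzGenerator β₁))

section gkzIdeal

variable {β₁ : ℂ}

theorem gkzGenerator_mem_weyl4 (i : Fin 4) : gkzGenerator β₁ i ∈ weyl4 := by
  fin_cases i
  · exact sub_mem (mul_mem (Di_mem_weyl4 0) (Di_mem_weyl4 1))
      (mul_mem (Di_mem_weyl4 2) (Di_mem_weyl4 3))
  · exact sub_mem (sub_mem (Xi_mul_Di_mem_weyl4 0 0) (Xi_mul_Di_mem_weyl4 3 3))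
      (Subalgebra.smul_mem _ (one_mem _) _)
  · exact add_mem (Xi_mul_Di_mem_weyl4 1 1) (Xi_mul_Di_mem_weyl4 3 3)
  · exact sub_mem (add_mem (Xi_mul_Di_mem_weyl4 2 2) (Xi_mul_Di_mem_weyl4 3 3)) (one_mem _)

theorem gkzGenerator_mem_gkzIdeal (i : Fin 4) : gkzGenerator β₁ i ∈ gkzIdeal β₁ :=
  Submodule.subset_span ⟨i, rfl⟩

theorem mul_mem_gkzIdeal {q P : Module.End ℂ P4} (hq : q ∈ weyl4) (hP : P ∈ gkzIdeal β₁) :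
    q * P ∈ gkzIdeal β₁ :=
  Submodule.smul_mem _ (⟨q, hq⟩ : weyl4) hP

theorem smul_mem_gkzIdeal (c : ℂ) {P : Module.End ℂ P4} (hP : P ∈ gkzIdeal β₁) :
    c • P ∈ gkzIdeal β₁ :=
  Submodule.smul_of_tower_mem _ c hP

/- Plain `sub_mem` is not available: instance search for `AddSubgroupClass` fails on this left
`weyl4`-module, so we subtract in the underlying `ℂ`-submodule. -/
theorem sub_mem_gkzIdeal {P Q : Module.End ℂ P4} (hP : P ∈ gkzIdeal β₁) (hQ : Q ∈ gkzIdeal β₁) :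
    P - Q ∈ gkzIdeal β₁ :=
  ((gkzIdeal β₁).restrictScalars ℂ).sub_mem hP hQ

theorem commutator_mem_gkzIdeal {P Q : Module.End ℂ P4} (hPw : P ∈ weyl4) (hQw : Q ∈ weyl4)
    (hP : P ∈ gkzIdeal β₁) (hQ : Q ∈ gkzIdeal β₁) : P * Q - Q * P ∈ gkzIdeal β₁ :=
  sub_mem_gkzIdeal (mul_mem_gkzIdeal hPw hQ) (mul_mem_gkzIdeal hQw hP)

theorem commutator_gkzGenerator_one_zero :
    gkzGenerator β₁ 1 * gkzGenerator β₁ 0 - gkzGenerator β₁ 0 * gkzGenerator β₁ 1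
      = -(Di 0 * Di 1 + Di 2 * Di 3) := by
  refine LinearMap.ext fun p => ?_
  simp [gkzGenerator, pderiv_X, pderiv_pderiv_comm, smul_eq_C_mul]
  ring

theorem Di_mul_Di_mem_gkzIdeal : Di 0 * Di 1 ∈ gkzIdeal β₁ ∧ Di 2 * Di 3 ∈ gkzIdeal β₁ := by
  have hdiff : Di 0 * Di 1 - Di 2 * Di 3 ∈ gkzIdeal β₁ := gkzGenerator_mem_gkzIdeal 0
  have hsum : Di 0 * Di 1 + Di 2 * Di 3 ∈ gkzIdeal β₁ := by
    rw [← neg_neg (Di 0 * Di 1 + Di 2 * Di 3), ← commutator_gkzGenerator_one_zero (β₁ := β₁),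
      neg_sub]
    exact commutator_mem_gkzIdeal (gkzGenerator_mem_weyl4 0) (gkzGenerator_mem_weyl4 1)
      (gkzGenerator_mem_gkzIdeal 0) (gkzGenerator_mem_gkzIdeal 1)
  constructor
  · convert smul_mem_gkzIdeal (2⁻¹ : ℂ) ((gkzIdeal β₁).add_mem hsum hdiff) using 1
    module
  · convert smul_mem_gkzIdeal (2⁻¹ : ℂ) (sub_mem_gkzIdeal hsum hdiff) using 1
    module

theorem Xi3_Xi3_Di3_Di3_mem_gkzIdeal : Xi 3 * Xi 3 * Di 3 * Di 3 ∈ gkzIdeal β₁ := by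
  have h : Xi 3 * Xi 3 * Di 3 * Di 3
      = Xi 3 * Di 3 * gkzGenerator β₁ 3 - Xi 2 * Xi 3 * (Di 2 * Di 3) := by
    refine LinearMap.ext fun p => ?_
    simp [gkzGenerator, pderiv_X, pderiv_pderiv_comm]
    ring
  rw [h]
  exact sub_mem_gkzIdeal (mul_mem_gkzIdeal (Xi_mul_Di_mem_weyl4 3 3) (gkzGenerator_mem_gkzIdeal 3))
    (mul_mem_gkzIdeal (mul_mem (Xi_mem_weyl4 2) (Xi_mem_weyl4 3)) Di_mul_Di_mem_gkzIdeal.2)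

/- For `T = x₂x₃∂₁∂₄`: `T (x₂∂₂ + x₄∂₄) - T (x₃∂₃ + x₄∂₄ - 1) = T (θ₂ - θ₃ + 1)`, while `Tθ₂`
and `Tθ₃` are left multiples of `∂₁∂₂` and `∂₃∂₄`. -/
theorem Xi1_Xi2_Di0_Di3_mem_gkzIdeal : Xi 1 * Xi 2 * Di 0 * Di 3 ∈ gkzIdeal β₁ := by
  set T := Xi 1 * Xi 2 * Di 0 * Di 3
  have hTw : T ∈ weyl4 :=
    mul_mem (mul_mem (mul_mem (Xi_mem_weyl4 1) (Xi_mem_weyl4 2)) (Di_mem_weyl4 0)) (Di_mem_weyl4 3)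
  have h : T = T * gkzGenerator β₁ 2 - T * gkzGenerator β₁ 3
      - Xi 1 * Xi 1 * Xi 2 * Di 3 * (Di 0 * Di 1) + Xi 1 * Xi 2 * Xi 2 * Di 0 * (Di 2 * Di 3) := by
    refine LinearMap.ext fun p => ?_
    simp [T, gkzGenerator, pderiv_X, pderiv_pderiv_comm]
    ring
  rw [h]
  refine (gkzIdeal β₁).add_mem (sub_mem_gkzIdeal (sub_mem_gkzIdeal ?_ ?_) ?_) ?_
  · exact mul_mem_gkzIdeal hTw (gkzGenerator_mem_gkzIdeal 2)
  · exact mul_mem_gkzIdeal hTw (gkzGenerator_mem_gkzIdeal 3)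
  · exact mul_mem_gkzIdeal
      (mul_mem (mul_mem (mul_mem (Xi_mem_weyl4 1) (Xi_mem_weyl4 1)) (Xi_mem_weyl4 2))
        (Di_mem_weyl4 3)) Di_mul_Di_mem_gkzIdeal.1
  · exact mul_mem_gkzIdeal
      (mul_mem (mul_mem (mul_mem (Xi_mem_weyl4 1) (Xi_mem_weyl4 2)) (Xi_mem_weyl4 2))
        (Di_mem_weyl4 0)) Di_mul_Di_mem_gkzIdeal.2

theorem U_mul_Di0_sub_eq :
    (-(Xi 0 * Xi 3 - Xi 1 * Xi 2) * Di 3 + (β₁ + 1) • Xi 0) * Di 0 - (β₁ * (β₁ + 1)) • 1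
      = ((β₁ + 1) • 1 - Xi 3 * Di 3) * gkzGenerator β₁ 1
        + Xi 1 * Xi 2 * Di 0 * Di 3 - Xi 3 * Xi 3 * Di 3 * Di 3 := by
  refine LinearMap.ext fun p => ?_
  simp [gkzGenerator, pderiv_X, pderiv_pderiv_comm, smul_eq_C_mul]
  ring

theorem U_mul_Di0_sub_mem_gkzIdeal :
    (-(Xi 0 * Xi 3 - Xi 1 * Xi 2) * Di 3 + (β₁ + 1) • Xi 0) * Di 0 - (β₁ * (β₁ + 1)) • 1
      ∈ gkzIdeal β₁ := by
  rw [U_mul_Di0_sub_eq]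
  refine sub_mem_gkzIdeal ((gkzIdeal β₁).add_mem (mul_mem_gkzIdeal ?_ (gkzGenerator_mem_gkzIdeal 1))
    Xi1_Xi2_Di0_Di3_mem_gkzIdeal) Xi3_Xi3_Di3_Di3_mem_gkzIdeal
  exact sub_mem (Subalgebra.smul_mem _ (one_mem _) _) (Xi_mul_Di_mem_weyl4 3 3)

end gkzIdeal

/-- for the GKZ system with
`A` having columns `(1,0,0),(0,1,0),(0,0,1),(−1,1,1)` and `β = (β₁,0,1)`,
the operator `U = −(x₁x₄ − x₂x₃)∂₄ + (β₁+1)x₁` satisfies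
`U·∂₁ − β₁(β₁+1) ∈ H_A((β₁,0,1))`, i.e. it is a left `D₄`-combination of the
generators `∂₁∂₂ − ∂₃∂₄`, `x₁∂₁ − x₄∂₄ − β₁`, `x₂∂₂ + x₄∂₄`, `x₃∂₃ + x₄∂₄ − 1`. -/
theorem U_contiguity_in_GKZ_ideal (β₁ : ℂ) :
    ∃ q₀ q₁ q₂ q₃ : Module.End ℂ P4,
      q₀ ∈ weyl4 ∧ q₁ ∈ weyl4 ∧ q₂ ∈ weyl4 ∧ q₃ ∈ weyl4 ∧
      (-(Xi 0 * Xi 3 - Xi 1 * Xi 2) * Di 3 + (β₁ + 1) • Xi 0) * Di 0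
          - (β₁ * (β₁ + 1)) • 1
        = q₀ * (Di 0 * Di 1 - Di 2 * Di 3)
          + q₁ * (Xi 0 * Di 0 - Xi 3 * Di 3 - β₁ • 1)
          + q₂ * (Xi 1 * Di 1 + Xi 3 * Di 3)
          + q₃ * (Xi 2 * Di 2 + Xi 3 * Di 3 - 1) := by
  obtain ⟨c, hc⟩ :=
    (Submodule.mem_span_range_iff_exists_fun weyl4).1 (U_mul_Di0_sub_mem_gkzIdeal (β₁ := β₁))
  refine ⟨c 0, c 1, c 2, c 3, (c 0).2, (c 1).2, (c 2).2, (c 3).2, ?_⟩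
  rw [← hc, Fin.sum_univ_four]
  rfl
end

section
/- Let ℓ(c) = (∂ − (x∂ − c))·x∂ in the Weyl algebra over ℂ(c) and let H = (x(1−x)/(c+1))∂ + 1 in the rational Weyl algebra ℂ(c)(x)⟨∂⟩. Then ℓ(c+1)·H lies in the left ideal of the rational Weyl algebra generated by ℓ(c); i.e., H is an up-step contiguity operator sending solutions of ℓ(c) to solutions of ℓ(c+1). -/
/-- The derivative `d/dx` on the field of rational functions `ℂ(x)`,
computed via the quotient rule on the canonical numerator and denominator. -/
noncomputable def Drat (f : RatFunc ℂ) : RatFunc ℂ :=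
  (algebraMap (Polynomial ℂ) (RatFunc ℂ) (Polynomial.derivative f.num)
        * algebraMap (Polynomial ℂ) (RatFunc ℂ) f.denom
      - algebraMap (Polynomial ℂ) (RatFunc ℂ) f.num
        * algebraMap (Polynomial ℂ) (RatFunc ℂ) (Polynomial.derivative f.denom))
    / algebraMap (Polynomial ℂ) (RatFunc ℂ) f.denom ^ 2

open Polynomial

local notation "am" => algebraMap (Polynomial ℂ) (RatFunc ℂ)

lemma Drat_rep (f : RatFunc ℂ) (p q : Polynomial ℂ) (hq : q ≠ 0)
    (hfpq : f = am p / am q) :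
    Drat f =
      (am (derivative p) * am q - am p * am (derivative q)) / am q ^ 2 := by
  have hd : f.denom ≠ 0 := f.denom_ne_zero
  have hdq : am q ≠ 0 := RatFunc.algebraMap_ne_zero hq
  have hdd : am f.denom ≠ 0 := RatFunc.algebraMap_ne_zero hd
  have E : f.num * q = p * f.denom := by
    apply RatFunc.algebraMap_injective ℂ
    rw [map_mul, map_mul]
    have h1 : am f.num / am f.denom = am p / am q := by
      rw [RatFunc.num_div_denom, hfpq]
    exact (div_eq_div_iff hdd hdq).mp h1
  have E' : derivative f.num * q + f.num * derivative q
      = derivative p * f.denom + p * derivative f.denom := by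
    have := congrArg derivative E
    simpa [derivative_mul] using this
  have Er : am f.num * am q = am p * am f.denom := by
    rw [← map_mul, ← map_mul, E]
  have Er' : am (derivative f.num) * am q + am f.num * am (derivative q)
      = am (derivative p) * am f.denom + am p * am (derivative f.denom) := by
    rw [← map_mul, ← map_mul, ← map_mul, ← map_mul, ← map_add, ← map_add, E']
  rw [Drat, div_eq_div_iff (pow_ne_zero 2 hdd) (pow_ne_zero 2 hdq)]
  linear_combination (am f.denom * am q) * Er' -
    (am (derivative f.denom) * am q + am f.denom * am (derivative q)) * Er

lemma Drat_self_rep (f : RatFunc ℂ) :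
    f = am f.num / am f.denom := (RatFunc.num_div_denom f).symm

lemma exists_rep (f : RatFunc ℂ) : ∃ p q, q ≠ 0 ∧ f = am p / am q :=
  ⟨f.num, f.denom, f.denom_ne_zero, (RatFunc.num_div_denom f).symm⟩

lemma Drat_add (f g : RatFunc ℂ) : Drat (f + g) = Drat f + Drat g := by
  obtain ⟨p1, q1, hq1, rfl⟩ := exists_rep f
  obtain ⟨p2, q2, hq2, rfl⟩ := exists_rep g
  have h1 : am q1 ≠ 0 := RatFunc.algebraMap_ne_zero hq1
  have h2 : am q2 ≠ 0 := RatFunc.algebraMap_ne_zero hq2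
  have hfg : am p1 / am q1 + am p2 / am q2
      = am (p1 * q2 + p2 * q1) / am (q1 * q2) := by
    rw [map_add, map_mul, map_mul, map_mul]
    field_simp
  rw [hfg, Drat_rep _ _ _ (mul_ne_zero hq1 hq2) rfl,
    Drat_rep _ p1 q1 hq1 rfl, Drat_rep _ p2 q2 hq2 rfl]
  simp only [derivative_add, derivative_mul, map_add, map_mul]
  field_simp
  ring

lemma Drat_mul (f g : RatFunc ℂ) : Drat (f * g) = Drat f * g + f * Drat g := by
  obtain ⟨p1, q1, hq1, rfl⟩ := exists_rep f
  obtain ⟨p2, q2, hq2, rfl⟩ := exists_rep g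
  have h1 : am q1 ≠ 0 := RatFunc.algebraMap_ne_zero hq1
  have h2 : am q2 ≠ 0 := RatFunc.algebraMap_ne_zero hq2
  have hfg : am p1 / am q1 * (am p2 / am q2) = am (p1 * p2) / am (q1 * q2) := by
    rw [map_mul, map_mul]
    field_simp
  rw [hfg, Drat_rep _ _ _ (mul_ne_zero hq1 hq2) rfl,
    Drat_rep _ p1 q1 hq1 rfl, Drat_rep _ p2 q2 hq2 rfl]
  simp only [derivative_mul, map_add, map_mul]
  field_simp
  ring

lemma Drat_algebraMap (p : Polynomial ℂ) : Drat (am p) = am (derivative p) := by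
  have h := Drat_rep (am p) p 1 one_ne_zero (by simp)
  simpa using h

lemma Drat_X : Drat RatFunc.X = 1 := by
  have := Drat_algebraMap Polynomial.X
  simpa [RatFunc.algebraMap_X] using this

lemma Drat_C (a : ℂ) : Drat (RatFunc.C a) = 0 := by
  have := Drat_algebraMap (Polynomial.C a)
  simpa [RatFunc.algebraMap_C] using this

lemma Drat_one : Drat (1 : RatFunc ℂ) = 0 := by
  simpa using Drat_C 1

lemma Drat_neg (f : RatFunc ℂ) : Drat (-f) = -Drat f := by
  have h : (-f : RatFunc ℂ) = RatFunc.C (-1) * f := by simp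
  rw [h, Drat_mul, Drat_C]
  simp

lemma Drat_sub (f g : RatFunc ℂ) : Drat (f - g) = Drat f - Drat g := by
  rw [sub_eq_add_neg, Drat_add, Drat_neg, sub_eq_add_neg]

lemma Drat_zero : Drat (0 : RatFunc ℂ) = 0 := by
  simpa using Drat_C 0

lemma Drat_C_inv (a : ℂ) : Drat (RatFunc.C a)⁻¹ = 0 := by
  rw [← map_inv₀]
  exact Drat_C _

/-- An operator on `ℂ(x)` belongs to the rational Weyl algebra
`R = ℂ(x)⟨∂⟩` iff it is of the form `Σ aᵢ(x) ∂ⁱ` with rational coefficients. -/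
def IsRatWeyl (q : RatFunc ℂ → RatFunc ℂ) : Prop :=
  ∃ (n : ℕ) (a : ℕ → RatFunc ℂ),
    ∀ f, q f = ∑ i ∈ Finset.range (n + 1), a i * Drat^[i] f

/-- The operator `ℓ(c) = (∂ − (x∂ − c))·(x∂)` acting on `ℂ(x)`. -/
noncomputable def lop (c : ℂ) (f : RatFunc ℂ) : RatFunc ℂ :=
  Drat (RatFunc.X * Drat f) - (RatFunc.X * Drat (RatFunc.X * Drat f)
    - RatFunc.C c * (RatFunc.X * Drat f))

/-- The up-step operator `H = (x(1−x)/(c+1))∂ + 1`. -/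
noncomputable def Hop (c : ℂ) (f : RatFunc ℂ) : RatFunc ℂ :=
  RatFunc.X * (1 - RatFunc.X) / RatFunc.C (c + 1) * Drat f + f

/-- `ℓ(c+1)·H` lies in the left ideal of the rational Weyl
algebra generated by `ℓ(c)`: there is `q ∈ R = ℂ(x)⟨∂⟩` with
`ℓ(c+1)·H = q·ℓ(c)`, so `H` sends solutions of `ℓ(c)` to solutions of `ℓ(c+1)`. -/
theorem upstep_rational_solution (c : ℂ) (hc : c + 1 ≠ 0) :
    ∃ q : RatFunc ℂ → RatFunc ℂ, IsRatWeyl q ∧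
      ∀ f : RatFunc ℂ, lop (c + 1) (Hop c f) = q (lop c f) := by
  set A : RatFunc ℂ := RatFunc.X * (1 - RatFunc.X) / RatFunc.C (c + 1) with hA
  set B : RatFunc ℂ := (RatFunc.C (c + 2) - RatFunc.X) / RatFunc.C (c + 1) with hB
  refine ⟨fun g => A * Drat g + B * g, ⟨1, fun i => if i = 0 then B else A, ?_⟩, ?_⟩
  · intro f
    simp [Finset.sum_range_succ]
    ring
  · intro f
    have hC : RatFunc.C (c + 1) ≠ 0 := by
      rw [← RatFunc.algebraMap_C]
      exact RatFunc.algebraMap_ne_zero (Polynomial.C_ne_zero.mpr hc)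
    simp only [lop, Hop, hA, hB, div_eq_mul_inv]
    simp only [Drat_mul, Drat_add, Drat_sub, Drat_X, Drat_C, Drat_one, Drat_zero, Drat_C_inv,
      mul_zero, zero_mul, add_zero, zero_add]
    simp only [map_add, map_one, map_ofNat]
    have hC' : (1 : RatFunc ℂ) + RatFunc.C c ≠ 0 := by
      have h1 : RatFunc.C (c + 1) = RatFunc.C c + 1 := by rw [map_add, map_one]
      rw [h1] at hC
      rwa [add_comm]
    have hu : (1 + RatFunc.C c) * (1 + RatFunc.C c)⁻¹ = 1 := mul_inv_cancel₀ hC'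
    linear_combination (-(RatFunc.X * Drat f * RatFunc.C c + RatFunc.X * Drat (Drat f)
      - RatFunc.X ^ 2 * Drat (Drat f) + Drat f)) * hu
end
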